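/- Optimality transfer of return capping (main proposition, abstract form): let (Z_i)_{i ∈ I} be a nonempty family of bounded real random variables (the return distributions of policies), α ∈ (0,1), and suppose i* ∈ I maximizes CVaR_α, i.e. CVaR_α(Z_i) ≤ CVaR_α(Z_{i*}) for all i ∈ I. Set C = VaR_α(Z_{i*}). Then (a) i* also maximizes the capped expectation: E[min(Z_i, C)] ≤ E[min(Z_{i*}, C)] for all i ∈ I; and (b) any j ∈ I maximizing the capped expectation (E[min(Z_i, C)] ≤ E[min(Z_j, C)] for all i) also maximizes CVaR_α: CVaR_α(Z_j) = CVaR_α(Z_{i*}). -/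

import Mathlib

/-!
Under the uniform distribution on `(0, 1)` the quantile function `x ↦ VaR_x(Z)` has the law of
`Z` (it is the lower Galois adjoint of the right-continuous cdf), so
`E[min(Z, C)] = ∫_0^1 min(VaR_x(Z), C) dx`. Splitting at `α` and bounding `min(VaR_x, C)` by
`VaR_x` on `(0, α]` and by `C` on `(α, 1)` gives `E[min(Z, C)] ≤ α CVaR_α(Z) + (1 - α) C`, with
equality for `C = VaR_α(Z)` by monotonicity of the quantile function. Both parts of the
theorem follow by comparing these affine functions of `CVaR_α`.
-/

open MeasureTheory

noncomputable def VaR {Ω : Type*} [MeasurableSpace Ω] (μ : Measure Ω) (Z : Ω → ℝ) (x : ℝ) : ℝ :=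
  sInf {z : ℝ | x ≤ (μ {ω | Z ω ≤ z}).toReal}

noncomputable def CVaR {Ω : Type*} [MeasurableSpace Ω] (μ : Measure Ω) (Z : Ω → ℝ) (α : ℝ) : ℝ :=
  (1 / α) * ∫ x in (0:ℝ)..α, VaR μ Z x

section

open Set Filter Topology ProbabilityTheory

lemma sInf_setOf_le_cdf_le_iff (ν : Measure ℝ) [IsProbabilityMeasure ν] {x z : ℝ}
    (hx0 : 0 < x) (hx1 : x < 1) : sInf {w | x ≤ cdf ν w} ≤ z ↔ x ≤ cdf ν z := by
  have hne : {w | x ≤ cdf ν w}.Nonempty :=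
    ((tendsto_cdf_atTop ν).eventually (eventually_ge_nhds hx1)).exists
  have hbdd : BddBelow {w | x ≤ cdf ν w} := by
    obtain ⟨a, ha⟩ := eventually_atBot.1 ((tendsto_cdf_atBot ν).eventually (eventually_lt_nhds hx0))
    exact ⟨a, fun w hw => le_of_not_gt fun hwa => (ha w hwa.le).not_ge hw⟩
  refine ⟨fun hz => ?_, fun hz => csInf_le hbdd hz⟩
  -- `x ≤ cdf ν w` for every `w > z`, and the cdf is right-continuous.
  refine ge_of_tendsto (((cdf ν).right_continuous z).mono Ioi_subset_Ici_self)
    (eventually_nhdsWithin_of_forall fun w (hw : z < w) => ?_)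
  obtain ⟨s, hs, hsw⟩ := exists_lt_of_csInf_lt hne (hz.trans_lt hw)
  exact hs.trans ((cdf ν).mono hsw.le)

lemma mul_CVaR {Ω : Type*} [MeasurableSpace Ω] (μ : Measure Ω) (Z : Ω → ℝ) {α : ℝ} (hα : 0 < α) :
    α * CVaR μ Z α = ∫ x in Ioc 0 α, VaR μ Z x := by
  rw [CVaR, intervalIntegral.integral_of_le hα.le, ← mul_assoc, mul_one_div_cancel hα.ne', one_mul]

variable {Ω : Type*} [MeasurableSpace Ω] {μ : Measure Ω} [IsProbabilityMeasure μ] {Z : Ω → ℝ}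

lemma cdf_map_apply (hZ : AEMeasurable Z μ) (z : ℝ) :
    cdf (μ.map Z) z = (μ {ω | Z ω ≤ z}).toReal := by
  have := Measure.isProbabilityMeasure_map hZ
  rw [cdf_eq_real, measureReal_def, Measure.map_apply_of_aemeasurable hZ measurableSet_Iic]
  rfl

lemma VaR_le_iff (hZ : AEMeasurable Z μ) {x z : ℝ} (hx0 : 0 < x) (hx1 : x < 1) :
    VaR μ Z x ≤ z ↔ x ≤ (μ {ω | Z ω ≤ z}).toReal := by
  have := Measure.isProbabilityMeasure_map hZ
  simpa only [VaR, cdf_map_apply hZ] using sInf_setOf_le_cdf_le_iff (μ.map Z) hx0 hx1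

lemma VaR_monotoneOn (hZ : AEMeasurable Z μ) : MonotoneOn (VaR μ Z) (Ioo 0 1) :=
  fun _ hx _ hy hxy =>
    (VaR_le_iff hZ hx.1 hx.2).2 <| hxy.trans <| (VaR_le_iff hZ hy.1 hy.2).1 le_rfl

lemma aemeasurable_VaR (hZ : AEMeasurable Z μ) :
    AEMeasurable (VaR μ Z) (volume.restrict (Ioo 0 1)) :=
  aemeasurable_restrict_of_monotoneOn measurableSet_Ioo (VaR_monotoneOn hZ)

lemma volume_Ioo_zero_one_inter_Iic {a : ℝ} (ha : a ≤ 1) :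
    volume (Ioo 0 1 ∩ Iic a) = ENNReal.ofReal a := by
  refine le_antisymm ?_ ?_
  · calc volume (Ioo 0 1 ∩ Iic a) ≤ volume (Icc 0 a) :=
          measure_mono fun x hx => ⟨hx.1.1.le, hx.2⟩
      _ = ENNReal.ofReal a := by rw [Real.volume_Icc, sub_zero]
  · calc ENNReal.ofReal a = volume (Ioo 0 a) := by rw [Real.volume_Ioo, sub_zero]
      _ ≤ volume (Ioo 0 1 ∩ Iic a) :=
          measure_mono fun x hx => ⟨⟨hx.1, hx.2.trans_le ha⟩, hx.2.le⟩

theorem map_VaR_restrict_Ioo (hZ : AEMeasurable Z μ) :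
    (volume.restrict (Ioo 0 1)).map (VaR μ Z) = μ.map Z := by
  refine Measure.ext_of_Iic _ _ fun z => ?_
  have hF : (μ {ω | Z ω ≤ z}).toReal ≤ 1 := by
    rw [← measureReal_def]; exact measureReal_le_one
  rw [Measure.map_apply_of_aemeasurable (aemeasurable_VaR hZ) measurableSet_Iic,
    Measure.map_apply_of_aemeasurable hZ measurableSet_Iic,
    Measure.restrict_apply' measurableSet_Ioo]
  have hset : VaR μ Z ⁻¹' Iic z ∩ Ioo 0 1 = Ioo 0 1 ∩ Iic (μ {ω | Z ω ≤ z}).toReal := by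
    ext x
    simp only [mem_inter_iff, mem_preimage, mem_Iic]
    exact ⟨fun h => ⟨h.2, (VaR_le_iff hZ h.2.1 h.2.2).1 h.1⟩,
      fun h => ⟨(VaR_le_iff hZ h.1.1 h.1.2).2 h.2, h.1⟩⟩
  rw [hset, volume_Ioo_zero_one_inter_Iic hF,
    ENNReal.ofReal_toReal (measure_ne_top _ _)]
  rfl

theorem setIntegral_Ioo_comp_VaR (hZ : AEMeasurable Z μ) {g : ℝ → ℝ} (hg : Measurable g) :
    ∫ x in Ioo 0 1, g (VaR μ Z x) = ∫ ω, g (Z ω) ∂μ := by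
  rw [← integral_map (aemeasurable_VaR hZ) hg.aestronglyMeasurable, map_VaR_restrict_Ioo hZ,
    integral_map hZ hg.aestronglyMeasurable]

theorem integrableOn_Ioo_comp_VaR_iff (hZ : AEMeasurable Z μ) {g : ℝ → ℝ} (hg : Measurable g) :
    IntegrableOn (fun x => g (VaR μ Z x)) (Ioo 0 1) ↔ Integrable (fun ω => g (Z ω)) μ := by
  rw [IntegrableOn, ← Function.comp_def, ← integrable_map_measure hg.aestronglyMeasurable
    (aemeasurable_VaR hZ), map_VaR_restrict_Ioo hZ,
    integrable_map_measure hg.aestronglyMeasurable hZ, Function.comp_def]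

lemma integrableOn_min_VaR_const (hZ : Integrable Z μ) (C : ℝ) :
    IntegrableOn (fun x => min (VaR μ Z x) C) (Ioo 0 1) :=
  (integrableOn_Ioo_comp_VaR_iff hZ.aemeasurable (g := fun z => min z C) (by fun_prop)).2
    (hZ.inf (integrable_const C))

lemma integral_min_eq_setIntegral_Ioc_add_setIntegral_Ioo (hZ : Integrable Z μ) {α : ℝ}
    (hα : 0 < α) (hα1 : α < 1) (C : ℝ) :
    ∫ ω, min (Z ω) C ∂μ
      = (∫ x in Ioc 0 α, min (VaR μ Z x) C) + ∫ x in Ioo α 1, min (VaR μ Z x) C := by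
  have hint := integrableOn_min_VaR_const hZ C
  rw [← setIntegral_Ioo_comp_VaR hZ.aemeasurable (g := fun z => min z C) (by fun_prop),
    ← Ioc_union_Ioo_eq_Ioo hα.le hα1,
    setIntegral_union (Ioc_disjoint_Ioi_same.mono_right Ioo_subset_Ioi_self) measurableSet_Ioo
      (hint.mono_set (Ioc_subset_Ioo_right hα1)) (hint.mono_set (Ioo_subset_Ioo_left hα.le))]

theorem integral_min_le_mul_CVaR_add_mul (hZ : Integrable Z μ) {α : ℝ} (hα : 0 < α)
    (hα1 : α < 1) (C : ℝ) :
    ∫ ω, min (Z ω) C ∂μ ≤ α * CVaR μ Z α + (1 - α) * C := by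
  have hVaR : IntegrableOn (VaR μ Z) (Ioc 0 α) :=
    ((integrableOn_Ioo_comp_VaR_iff hZ.aemeasurable measurable_id).2 hZ).mono_set
      (Ioc_subset_Ioo_right hα1)
  have hlow : ∫ x in Ioc 0 α, min (VaR μ Z x) C ≤ α * CVaR μ Z α := by
    rw [mul_CVaR μ Z hα]
    exact setIntegral_mono_on (hVaR.inf (integrableOn_const measure_Ioc_lt_top.ne)) hVaR
      measurableSet_Ioc fun x _ => min_le_left _ _
  have hupp : ∫ x in Ioo α 1, min (VaR μ Z x) C ≤ (1 - α) * C := by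
    calc ∫ x in Ioo α 1, min (VaR μ Z x) C ≤ ∫ _ in Ioo α 1, C :=
          setIntegral_mono_on ((integrableOn_min_VaR_const hZ C).mono_set
            (Ioo_subset_Ioo_left hα.le)) (integrableOn_const measure_Ioo_lt_top.ne)
            measurableSet_Ioo fun x _ => min_le_right _ _
      _ = (1 - α) * C := by simp [hα1.le]
  rw [integral_min_eq_setIntegral_Ioc_add_setIntegral_Ioo hZ hα hα1]
  exact add_le_add hlow hupp

theorem integral_min_VaR_eq_mul_CVaR_add_mul (hZ : Integrable Z μ) {α : ℝ} (hα : 0 < α)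
    (hα1 : α < 1) :
    ∫ ω, min (Z ω) (VaR μ Z α) ∂μ = α * CVaR μ Z α + (1 - α) * VaR μ Z α := by
  have hmono := VaR_monotoneOn hZ.aemeasurable
  have hα' : α ∈ Ioo 0 1 := ⟨hα, hα1⟩
  have hlow : ∫ x in Ioc 0 α, min (VaR μ Z x) (VaR μ Z α) = α * CVaR μ Z α := by
    rw [mul_CVaR μ Z hα]
    exact setIntegral_congr_fun measurableSet_Ioc fun x hx =>
      min_eq_left (hmono ⟨hx.1, hx.2.trans_lt hα1⟩ hα' hx.2)
  have hupp : ∫ x in Ioo α 1, min (VaR μ Z x) (VaR μ Z α) = (1 - α) * VaR μ Z α := by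
    rw [setIntegral_congr_fun measurableSet_Ioo fun x hx =>
      min_eq_right (hmono hα' ⟨hα.trans hx.1, hx.2⟩ hx.1.le)]
    simp [hα1.le]
  rw [integral_min_eq_setIntegral_Ioc_add_setIntegral_Ioo hZ hα hα1, hlow, hupp]

end

theorem return_capping_optimality_general {Ω : Type*} [MeasurableSpace Ω] (μ : Measure Ω)
    [IsProbabilityMeasure μ] {I : Type*} (Z : I → Ω → ℝ)
    (hZ : ∀ i, Measurable (Z i)) (M : ℝ) (hbd : ∀ i ω, |Z i ω| ≤ M)
    (α : ℝ) (hα : 0 < α) (hα1 : α < 1) (istar : I)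
    (hopt : ∀ i, CVaR μ (Z i) α ≤ CVaR μ (Z istar) α) :
    (∀ i, ∫ ω, min (Z i ω) (VaR μ (Z istar) α) ∂μ
        ≤ ∫ ω, min (Z istar ω) (VaR μ (Z istar) α) ∂μ)
    ∧ ∀ j, (∀ i, ∫ ω, min (Z i ω) (VaR μ (Z istar) α) ∂μ
        ≤ ∫ ω, min (Z j ω) (VaR μ (Z istar) α) ∂μ) →
      CVaR μ (Z j) α = CVaR μ (Z istar) α := by
  set C := VaR μ (Z istar) α
  have hint : ∀ i, Integrable (Z i) μ := fun i =>
    .of_bound (hZ i).aestronglyMeasurable M (ae_of_all _ (hbd i))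
  have hcap : ∀ i, ∫ ω, min (Z i ω) C ∂μ ≤ α * CVaR μ (Z i) α + (1 - α) * C := fun i =>
    integral_min_le_mul_CVaR_add_mul (hint i) hα hα1 C
  have hstar : ∫ ω, min (Z istar ω) C ∂μ = α * CVaR μ (Z istar) α + (1 - α) * C :=
    integral_min_VaR_eq_mul_CVaR_add_mul (hint istar) hα hα1
  refine ⟨fun i => ?_, fun j hj => le_antisymm (hopt j) ?_⟩
  · rw [hstar]
    exact (hcap i).trans (by gcongr; exact hopt i)
  · have := (hstar ▸ hj istar).trans (hcap j)
    exact le_of_mul_le_mul_left (by linarith) hα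

theorem return_capping_optimality {Ω : Type*} [MeasurableSpace Ω] (μ : Measure Ω)
    [IsProbabilityMeasure μ] {I : Type*} [Nonempty I] (Z : I → Ω → ℝ)
    (hZ : ∀ i, Measurable (Z i)) (M : ℝ) (hbd : ∀ i ω, |Z i ω| ≤ M)
    (α : ℝ) (hα : 0 < α) (hα1 : α < 1) (istar : I)
    (hopt : ∀ i, CVaR μ (Z i) α ≤ CVaR μ (Z istar) α) :
    (∀ i, ∫ ω, min (Z i ω) (VaR μ (Z istar) α) ∂μ
        ≤ ∫ ω, min (Z istar ω) (VaR μ (Z istar) α) ∂μ)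
    ∧ ∀ j, (∀ i, ∫ ω, min (Z i ω) (VaR μ (Z istar) α) ∂μ
        ≤ ∫ ω, min (Z j ω) (VaR μ (Z istar) α) ∂μ) →
      CVaR μ (Z j) α = CVaR μ (Z istar) α :=
  return_capping_optimality_general μ Z hZ M hbd α hα hα1 istar hopt
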